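/- Let k > 0 and β ∈ (0, π/2). Define φ(z) = z cos β + i · sqrtP(z² − k²) · sin β, γ⁺ = { w cos β + i√(w² − k²) sin β : w ∈ (k, ∞) }, γ⁻ = { w cos β − i√(w² − k²) sin β : w ∈ (k, ∞) }, D⁺ = { z + t : z ∈ γ⁺, t ∈ (0, ∞) }, and D⁻ = { z + t : z ∈ γ⁻, t ∈ (0, ∞) }. Then the restriction of φ to D⁻ is a bijection from D⁻ onto D⁺, and its inverse is the map w ↦ w cos β − i · sqrtP(w² − k²) · sin β. -/

import Mathlib

open MeasureTheory

/-- The branch of the complex square root with `θ ∈ [−π, π)`. -/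
noncomputable def sqrtP (z : ℂ) : ℂ :=
  if z.im = 0 ∧ z.re < 0 then -(z ^ (1/2 : ℂ)) else z ^ (1/2 : ℂ)

/-- The Cagniard–de Hoop mapping `φ(z) = z cos β + i sqrtP(z² − k²) sin β`. -/
noncomputable def phiCdH (k β : ℝ) (z : ℂ) : ℂ :=
  z * (Real.cos β : ℂ) + Complex.I * sqrtP (z ^ 2 - (k : ℂ) ^ 2) * (Real.sin β : ℂ)

/-- `γ⁺ = { w cos β + i√(w²−k²) sin β : w ∈ (k, ∞) }`. -/
def gammaPlus (k β : ℝ) : Set ℂ :=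
  {z | ∃ w : ℝ, k < w ∧
    z = (w * Real.cos β : ℝ) + Complex.I * (Real.sqrt (w ^ 2 - k ^ 2) * Real.sin β : ℝ)}

/-- `γ⁻ = { w cos β − i√(w²−k²) sin β : w ∈ (k, ∞) }`. -/
def gammaMinus (k β : ℝ) : Set ℂ :=
  {z | ∃ w : ℝ, k < w ∧
    z = (w * Real.cos β : ℝ) - Complex.I * (Real.sqrt (w ^ 2 - k ^ 2) * Real.sin β : ℝ)}

/-- `D⁻ = { z + t : z ∈ γ⁻, t ∈ (0, ∞) }`. -/
def DMinus (k β : ℝ) : Set ℂ :=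
  {ζ | ∃ z ∈ gammaMinus k β, ∃ t : ℝ, 0 < t ∧ ζ = z + (t : ℂ)}


/-- `D⁺ = { z + t : z ∈ γ⁺, t ∈ (0, ∞) }`. -/
def DPlus (k β : ℝ) : Set ℂ :=
  {ζ | ∃ z ∈ gammaPlus k β, ∃ t : ℝ, 0 < t ∧ ζ = z + (t : ℂ)}


/-!
For `c² + s² = 1` and `u² = z² - k²` one has `(z c + i u s)² - k² = (u c + i z s)²`. As `sqrtP` is a
square root with nonnegative real part, it returns `u c + i z s` as soon as this has positive real
part, which holds for `u = sqrtP (z² - k²)` when `s = sin β` and `Im z < 0`, or when `s = -sin β`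
and `Im z > 0`. So `w ↦ w cos β - i sqrtP (w² - k²) sin β` inverts `φ` between the two half-planes.

In coordinates, `a + ib ∈ D^±` iff `±b > 0`, `a > 0` and `a² sin² β - b² cos² β > k² cos² β sin² β`,
and `D⁻` is the mirror image of `D⁺`. That `φ` maps `D⁻` into `D⁺` is then a polynomial inequality,
driven by the factorisation `(x² s² - b² c²)(y² s² + b² c²) = b² (a² s² - b² c² - k² c² s²)` for
`x - iy = sqrtP ((a - ib)² - k²)`; conjugating gives the same statement for the inverse map.
-/

open Complex ComplexConjugate

theorem sqrtP_sq (z : ℂ) : sqrtP z ^ 2 = z := by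
  have h : (z ^ (1 / 2 : ℂ)) ^ 2 = z := by rw [one_div]; exact cpow_ofNat_inv_pow z 2
  unfold sqrtP; split_ifs <;> simp only [neg_sq, h]

theorem sqrtP_re_nonneg (z : ℂ) : 0 ≤ (sqrtP z).re := by
  unfold sqrtP
  split_ifs with h
  · have : ‖z‖ + z.re = 0 := by
      rw [← re_add_im z, h.1]; simp [abs_of_neg h.2]
    simp [one_div, cpow_inv_two_re, this]
  · rw [one_div, cpow_inv_two_re]; positivity

theorem sqrtP_sq_eq_self {v : ℂ} (hv : 0 < v.re) : sqrtP (v ^ 2) = v := by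
  have hfac : (sqrtP (v ^ 2) - v) * (sqrtP (v ^ 2) + v) = 0 := by
    linear_combination sqrtP_sq (v ^ 2)
  rcases mul_eq_zero.1 hfac with h | h
  · exact sub_eq_zero.1 h
  · have hre := sqrtP_re_nonneg (v ^ 2)
    rw [eq_neg_of_add_eq_zero_left h, neg_re] at hre
    linarith

noncomputable def cdhMap (k c s : ℝ) (z : ℂ) : ℂ :=
  z * c + I * sqrtP (z ^ 2 - (k : ℂ) ^ 2) * s

theorem cdhMap_neg_cdhMap {k c s : ℝ} (hcs : c ^ 2 + s ^ 2 = 1) {z : ℂ}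
    (h : 0 < (sqrtP (z ^ 2 - (k : ℂ) ^ 2) * c + I * z * s).re) :
    cdhMap k c (-s) (cdhMap k c s z) = z := by
  have hcs' : (c : ℂ) ^ 2 + (s : ℂ) ^ 2 = 1 := by exact_mod_cast hcs
  set u := sqrtP (z ^ 2 - (k : ℂ) ^ 2) with hu_def
  have hu : u ^ 2 = z ^ 2 - (k : ℂ) ^ 2 := sqrtP_sq _
  have hsq : cdhMap k c s z ^ 2 - (k : ℂ) ^ 2 = (u * c + I * z * s) ^ 2 := by
    rw [cdhMap, ← hu_def]
    linear_combination (-((c : ℂ) ^ 2 + (s : ℂ) ^ 2)) * hu + (k : ℂ) ^ 2 * hcs'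
      + (s : ℂ) ^ 2 * (u ^ 2 - z ^ 2) * I_sq
  rw [cdhMap, hsq, sqrtP_sq_eq_self h, cdhMap, ← hu_def]
  push_cast
  linear_combination z * hcs' - z * (s : ℂ) ^ 2 * I_sq

theorem cdhMap_neg_sin (k β : ℝ) :
    cdhMap k (Real.cos β) (-Real.sin β) = fun w : ℂ => w * (Real.cos β : ℂ) -
      I * sqrtP (w ^ 2 - (k : ℂ) ^ 2) * (Real.sin β : ℂ) := by
  funext w; simp only [cdhMap]; push_cast; ring

theorem phiCdH_invOn {k β : ℝ} (hc : 0 ≤ Real.cos β) (hs : 0 < Real.sin β) :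
    Set.InvOn (cdhMap k (Real.cos β) (-Real.sin β)) (phiCdH k β)
      {z | z.im < 0} {w | 0 < w.im} := by
  have hcs := Real.cos_sq_add_sin_sq β
  constructor
  · intro z hz
    refine cdhMap_neg_cdhMap hcs ?_
    simp only [add_re, mul_re, I_re, I_im, ofReal_re, ofReal_im]
    nlinarith [sqrtP_re_nonneg (z ^ 2 - (k : ℂ) ^ 2), mul_pos (neg_pos.2 (hz : z.im < 0)) hs]
  · intro w hw
    have h := cdhMap_neg_cdhMap (k := k) (c := Real.cos β) (s := -Real.sin β)
      (by rwa [neg_sq]) (z := w) ?_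
    · rwa [neg_neg] at h
    simp only [add_re, mul_re, I_re, I_im, ofReal_re, ofReal_im]
    nlinarith [sqrtP_re_nonneg (w ^ 2 - (k : ℂ) ^ 2), mul_pos (hw : 0 < w.im) hs]

section Regions

variable {k β : ℝ}

theorem mem_DPlus_iff (hk : 0 ≤ k) (hc : 0 ≤ Real.cos β) (hs : 0 < Real.sin β) (z : ℂ) :
    z ∈ DPlus k β ↔ 0 < z.im ∧ 0 < z.re ∧
      (k * Real.cos β * Real.sin β) ^ 2 < (z.re * Real.sin β) ^ 2 - (z.im * Real.cos β) ^ 2 := by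
  set c := Real.cos β
  set s := Real.sin β
  constructor
  · rintro ⟨_, ⟨w, hkw, rfl⟩, t, ht, rfl⟩
    have hw : 0 < w := hk.trans_lt hkw
    have hq : 0 < Real.sqrt (w ^ 2 - k ^ 2) := Real.sqrt_pos.2 (by nlinarith)
    have hq2 : Real.sqrt (w ^ 2 - k ^ 2) ^ 2 = w ^ 2 - k ^ 2 := Real.sq_sqrt (by nlinarith)
    simp only [add_re, add_im, mul_re, mul_im, I_re, I_im, ofReal_re, ofReal_im]
    ring_nf
    refine ⟨by positivity, by positivity, ?_⟩
    rw [hq2]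
    nlinarith [mul_nonneg (mul_nonneg hw.le hc) ht.le, mul_pos ht ht, mul_pos hs hs]
  · rintro ⟨hb, ha, hH⟩
    set q := z.im / s
    set w := Real.sqrt (q ^ 2 + k ^ 2)
    have hw2 : w ^ 2 = q ^ 2 + k ^ 2 := Real.sq_sqrt (by positivity)
    have hkw : k < w := (Real.lt_sqrt hk).2 (by simp only [q]; nlinarith [div_pos hb hs])
    have hwq : Real.sqrt (w ^ 2 - k ^ 2) = q := by
      rw [hw2, add_sub_cancel_right, Real.sqrt_sq (div_pos hb hs).le]
    have hqs : q * s = z.im := div_mul_cancel₀ _ hs.ne'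
    have hwc : w * c < z.re := by
      refine (pow_lt_pow_iff_left₀ (by positivity) ha.le two_ne_zero).1 ?_
      rw [mul_pow, hw2, ← mul_lt_mul_iff_of_pos_right (pow_pos hs 2)]
      linear_combination hH + c ^ 2 * (q * s + z.im) * hqs
    refine ⟨_, ⟨w, hkw, rfl⟩, z.re - w * c, sub_pos.2 hwc, ?_⟩
    apply Complex.ext <;>
      simp only [add_re, add_im, mul_re, mul_im, I_re, I_im, ofReal_re, ofReal_im, hwq]
    · ring
    · linear_combination -hqs

theorem conj_mem_gammaPlus_iff {z : ℂ} : conj z ∈ gammaPlus k β ↔ z ∈ gammaMinus k β := by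
  refine exists_congr fun w => and_congr_right fun _ => ?_
  simp only [Complex.ext_iff, conj_re, conj_im, add_re, add_im, sub_re, sub_im, mul_re, mul_im,
    I_re, I_im, ofReal_re, ofReal_im]
  constructor <;> rintro ⟨hre, him⟩ <;> exact ⟨by linarith, by linarith⟩

theorem conj_mem_DPlus_iff {z : ℂ} : conj z ∈ DPlus k β ↔ z ∈ DMinus k β := by
  constructor
  · rintro ⟨y, hy, t, ht, h⟩
    refine ⟨conj y, conj_mem_gammaPlus_iff.1 (by rwa [conj_conj]), t, ht, ?_⟩
    rw [← conj_conj z, h, map_add, conj_ofReal]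
  · rintro ⟨y, hy, t, ht, rfl⟩
    exact ⟨conj y, conj_mem_gammaPlus_iff.2 hy, t, ht, by rw [map_add, conj_ofReal]⟩

theorem mem_DMinus_iff (hk : 0 ≤ k) (hc : 0 ≤ Real.cos β) (hs : 0 < Real.sin β) (z : ℂ) :
    z ∈ DMinus k β ↔ z.im < 0 ∧ 0 < z.re ∧
      (k * Real.cos β * Real.sin β) ^ 2 < (z.re * Real.sin β) ^ 2 - (z.im * Real.cos β) ^ 2 := by
  rw [← conj_mem_DPlus_iff, mem_DPlus_iff hk hc hs, conj_re, conj_im, neg_pos, neg_mul, neg_sq]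

end Regions

/-- Read `a - ib` as a point right of the hyperbola and `x - iy` as a square root of
`(a - ib)² - k²`: then `(a - ib) c + i (x - iy) s = (ac + ys) + i(xs - bc)` lies right of it too. -/
theorem hyperbola_region_rotate {a b x y c s k : ℝ} (hb : 0 < b) (hx : 0 < x) (hy : 0 < y)
    (hc : 0 ≤ c) (hs : 0 < s) (hcs : c ^ 2 + s ^ 2 = 1)
    (hre : x ^ 2 - y ^ 2 = a ^ 2 - b ^ 2 - k ^ 2) (him : x * y = a * b) (hH : (k * c * s) ^ 2 < (a * s) ^ 2 - (b * c) ^ 2) :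
    b * c < x * s ∧ (k * c * s) ^ 2 < ((a * c + y * s) * s) ^ 2 - ((x * s - b * c) * c) ^ 2 := by
  have hpos : 0 < y ^ 2 * s ^ 2 + b ^ 2 * c ^ 2 := by positivity
  have hfactor : (x ^ 2 * s ^ 2 - b ^ 2 * c ^ 2) * (y ^ 2 * s ^ 2 + b ^ 2 * c ^ 2)
      = b ^ 2 * ((a * s) ^ 2 - (b * c) ^ 2 - (k * c * s) ^ 2) := by
    linear_combination (b ^ 2 * c ^ 2 * s ^ 2) * hre + (s ^ 4 * (x * y + a * b)) * him
      + (a ^ 2 * b ^ 2 * s ^ 2 - b ^ 4 * c ^ 2) * hcs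
  have hbc : b * c < x * s := by
    have : (b * c) ^ 2 < (x * s) ^ 2 := by
      nlinarith [mul_pos (pow_pos hb 2) (sub_pos.2 hH)]
    exact (pow_lt_pow_iff_left₀ (by positivity) (by positivity) two_ne_zero).1 this
  refine ⟨hbc, ?_⟩
  have hexpand : ((a * c + y * s) * s) ^ 2 - ((x * s - b * c) * c) ^ 2 - (k * c * s) ^ 2
      = 2 * a * c * y * s ^ 3 + 2 * x * b * c ^ 3 * s
        + (y ^ 2 * s ^ 2 + b ^ 2 * c ^ 2) * (s ^ 2 - c ^ 2) := by
    linear_combination (-(s ^ 2 * c ^ 2)) * hre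
  have hxb : 2 * b ^ 2 * c ^ 4 ≤ 2 * x * b * c ^ 3 * s := by
    nlinarith [mul_nonneg (mul_nonneg hb.le (pow_nonneg hc 3)) (sub_pos.2 hbc).le]
  have hay : 2 * c ^ 2 * s ^ 2 * y ^ 2 ≤ 2 * a * c * y * s ^ 3 := by
    have : b * (2 * a * c * y * s ^ 3 - 2 * c ^ 2 * s ^ 2 * y ^ 2)
        = 2 * c * s ^ 2 * y ^ 2 * (x * s - b * c) := by
      linear_combination -2 * c * y * s ^ 3 * him
    have := (mul_nonneg_iff_of_pos_left hb).1
      (this ▸ mul_nonneg (by positivity) (sub_pos.2 hbc).le)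
    linarith
  have hsum : (y ^ 2 * s ^ 2 + b ^ 2 * c ^ 2) * (s ^ 2 - c ^ 2) + 2 * c ^ 2 * s ^ 2 * y ^ 2
      + 2 * b ^ 2 * c ^ 4 = y ^ 2 * s ^ 2 + b ^ 2 * c ^ 2 := by
    linear_combination (y ^ 2 * s ^ 2 + b ^ 2 * c ^ 2) * hcs
  linarith

theorem mem_DPlus_of_mem_DMinus {k β : ℝ} (hk : 0 ≤ k) (hc : 0 ≤ Real.cos β)
    (hs : 0 < Real.sin β) {z u : ℂ} (hz : z ∈ DMinus k β) (hu : u ^ 2 = z ^ 2 - (k : ℂ) ^ 2)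
    (hu₀ : 0 ≤ u.re) : z * (Real.cos β : ℂ) + I * u * (Real.sin β : ℂ) ∈ DPlus k β := by
  obtain ⟨hb, ha, hH⟩ := (mem_DMinus_iff hk hc hs z).1 hz
  have hre : u.re ^ 2 - u.im ^ 2 = z.re ^ 2 - z.im ^ 2 - k ^ 2 := by
    simpa [sq] using congrArg re hu
  have him : u.re * u.im = z.re * z.im := by
    have := congrArg im hu
    simp only [sq, mul_im, sub_im, ofReal_im, ofReal_re] at this
    linarith
  have hx : 0 < u.re := hu₀.lt_of_ne fun h => by
    rw [← h, zero_mul] at him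
    exact (mul_neg_of_pos_of_neg ha hb).ne him.symm
  have hy : u.im < 0 := by nlinarith
  obtain ⟨hbc, hH'⟩ := hyperbola_region_rotate (a := z.re) (k := k) (neg_pos.2 hb) hx
    (neg_pos.2 hy) hc hs (Real.cos_sq_add_sin_sq β) (by linear_combination hre)
    (by linear_combination -him) (by rwa [neg_mul, neg_sq])
  rw [mem_DPlus_iff hk hc hs]
  simp only [add_re, add_im, mul_re, mul_im, I_re, I_im, ofReal_re, ofReal_im]
  refine ⟨by nlinarith, by nlinarith, by convert hH' using 3 <;> ring⟩

section MapsTo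

variable {k β : ℝ}

theorem mapsTo_phiCdH (hk : 0 ≤ k) (hc : 0 ≤ Real.cos β) (hs : 0 < Real.sin β) :
    Set.MapsTo (phiCdH k β) (DMinus k β) (DPlus k β) := fun _ hz =>
  mem_DPlus_of_mem_DMinus hk hc hs hz (sqrtP_sq _) (sqrtP_re_nonneg _)

theorem mapsTo_cdhMap_neg_sin (hk : 0 ≤ k) (hc : 0 ≤ Real.cos β) (hs : 0 < Real.sin β) :
    Set.MapsTo (cdhMap k (Real.cos β) (-Real.sin β)) (DPlus k β) (DMinus k β) := by
  intro w hw
  set v := sqrtP (w ^ 2 - (k : ℂ) ^ 2)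
  have hconj : conj (cdhMap k (Real.cos β) (-Real.sin β) w)
      = conj w * (Real.cos β : ℂ) + I * conj v * (Real.sin β : ℂ) := by
    simp only [cdhMap, map_add, map_mul, conj_ofReal, conj_I]
    push_cast
    ring
  rw [← conj_mem_DPlus_iff, hconj]
  refine mem_DPlus_of_mem_DMinus hk hc hs (conj_mem_DPlus_iff.1 (by rwa [conj_conj])) ?_ ?_
  · rw [← map_pow, sqrtP_sq, map_sub, map_pow, map_pow, conj_ofReal]
  · rw [conj_re]; exact sqrtP_re_nonneg _

end MapsTo

/-- For `k > 0` and `β ∈ (0, π/2)`, the restriction of `φ` to `D⁻` is a bijection from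
`D⁻` onto `D⁺`, with inverse `w ↦ w cos β − i sqrtP(w² − k²) sin β`. -/
theorem phiCdH_bijOn (k β : ℝ) (hk : 0 < k) (hβ : β ∈ Set.Ioo 0 (Real.pi / 2)) :
    Set.BijOn (phiCdH k β) (DMinus k β) (DPlus k β) ∧
    Set.InvOn
      (fun w : ℂ => w * (Real.cos β : ℂ) - Complex.I * sqrtP (w ^ 2 - (k : ℂ) ^ 2) *
        (Real.sin β : ℂ))
      (phiCdH k β) (DMinus k β) (DPlus k β) := by
  have hc : 0 ≤ Real.cos β :=
    Real.cos_nonneg_of_mem_Icc ⟨by linarith [hβ.1, Real.pi_pos], hβ.2.le⟩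
  have hs : 0 < Real.sin β := Real.sin_pos_of_pos_of_lt_pi hβ.1 (by linarith [hβ.2, Real.pi_pos])
  rw [← cdhMap_neg_sin]
  have hinv : Set.InvOn (cdhMap k (Real.cos β) (-Real.sin β)) (phiCdH k β)
      (DMinus k β) (DPlus k β) :=
    (phiCdH_invOn hc hs).mono (fun z hz => ((mem_DMinus_iff hk.le hc hs z).1 hz).1)
      (fun w hw => ((mem_DPlus_iff hk.le hc hs w).1 hw).1)
  exact ⟨hinv.bijOn (mapsTo_phiCdH hk.le hc hs) (mapsTo_cdhMap_neg_sin hk.le hc hs), hinv⟩
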